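/- arXiv:1812.03333 — 3 statements merged into one kernel-verified Lean document; each statement's English description precedes it below -/
import Mathlib

section
/- The density f* satisfies the zero-flux identity (σ₁²/2) d/dx (x² f*(x)) = (a₁ − b₁x) f*(x) for every x > 0; consequently f* solves the stationary Fokker–Planck equation (1/2) d²/dx² (σ₁² x² f*(x)) − d/dx ((a₁ − b₁x) f*(x)) = 0 on (0,∞). -/
/-!
Writing `f = x^{-(a+1)} e^{-b/x}` up to its constant, `(x² f)' = (b + (1 - a) x) f`, and the
choice `a = 2c₁/σ₁²`, `b = 2a₁/σ₁²` makes `(σ₁²/2)(b + (1 - a) x) = a₁ - b₁ x`: the probability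
flux vanishes. Differentiating the zero-flux identity once more gives the stationary
Fokker–Planck equation.
-/

open Real

noncomputable section

def invGammaDensity (a b x : ℝ) : ℝ :=
  b ^ a / Gamma a * x ^ (-(a + 1)) * exp (-b / x)

theorem hasDerivAt_sq_mul_invGammaDensity (a b : ℝ) {x : ℝ} (hx : x ≠ 0) :
    HasDerivAt (fun y => y ^ 2 * invGammaDensity a b y)
      ((b + (1 - a) * x) * invGammaDensity a b x) x := by
  have hpow : HasDerivAt (fun y : ℝ => y ^ (-(a + 1))) (-(a + 1) * (x ^ (-(a + 1)) / x)) x := by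
    simpa only [rpow_sub_one hx] using hasDerivAt_rpow_const (p := -(a + 1)) (Or.inl hx)
  have hexp : HasDerivAt (fun y => exp (-b / y)) (exp (-b / x) * (b / x ^ 2)) x := by
    have hinv : HasDerivAt (fun y => -b / y) (b / x ^ 2) x := by
      simpa only [div_eq_mul_inv, neg_mul, mul_neg, neg_neg] using
        (hasDerivAt_inv hx).const_mul (-b)
    exact hinv.exp
  refine ((hasDerivAt_pow 2 x).mul ((hpow.const_mul (b ^ a / Gamma a)).mul hexp)).congr_deriv ?_
  simp only [invGammaDensity, Pi.mul_apply]
  field_simp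
  ring

theorem fokkerPlanck_stationary_of_zero_flux {s : Set ℝ} (hs : IsOpen s) {D μ f : ℝ → ℝ}
    (hflux : ∀ y ∈ s, 1 / 2 * deriv (fun y => D y * f y) y = μ y * f y) {x : ℝ} (hx : x ∈ s) :
    1 / 2 * deriv (deriv fun y => D y * f y) x - deriv (fun y => μ y * f y) x = 0 := by
  have hderiv : deriv (fun y => D y * f y) =ᶠ[nhds x] fun y => 2 * (μ y * f y) := by
    filter_upwards [hs.mem_nhds hx] with y hy
    linarith [hflux y hy]
  rw [hderiv.deriv_eq, deriv_const_mul_field]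
  ring

end

theorem stationary_density_solves_fokker_planck_general
    (a₁ b₁ σ₁ c₁ a b : ℝ) (hσ₁ : 0 < σ₁)
    (hc₁ : c₁ = b₁ + σ₁ ^ 2 / 2) (ha : a = 2 * c₁ / σ₁ ^ 2) (hb : b = 2 * a₁ / σ₁ ^ 2)
    (fstar : ℝ → ℝ)
    (hfstar : ∀ x : ℝ, fstar x = (b ^ a / Real.Gamma a) * x ^ (-(a + 1)) * Real.exp (-b / x)) :
    (∀ x : ℝ, 0 < x →
      σ₁ ^ 2 / 2 * deriv (fun y : ℝ => y ^ 2 * fstar y) x = (a₁ - b₁ * x) * fstar x) ∧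
    (∀ x : ℝ, 0 < x →
      (1 / 2) * deriv (deriv (fun y : ℝ => σ₁ ^ 2 * y ^ 2 * fstar y)) x
        - deriv (fun y : ℝ => (a₁ - b₁ * y) * fstar y) x = 0) := by
  obtain rfl : fstar = invGammaDensity a b := funext hfstar
  have hdrift (x : ℝ) : σ₁ ^ 2 / 2 * (b + (1 - a) * x) = a₁ - b₁ * x := by
    subst ha hb hc₁
    field_simp
    ring
  have hflux (x : ℝ) (hx : 0 < x) :
      σ₁ ^ 2 / 2 * deriv (fun y => y ^ 2 * invGammaDensity a b y) x
        = (a₁ - b₁ * x) * invGammaDensity a b x := by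
    rw [(hasDerivAt_sq_mul_invGammaDensity a b hx.ne').deriv, ← mul_assoc, hdrift]
  refine ⟨hflux, fun x hx => fokkerPlanck_stationary_of_zero_flux isOpen_Ioi (fun y hy => ?_) hx⟩
  simp only [mul_assoc, deriv_const_mul_field]
  rw [← hflux y hy]
  ring

/-- With `c₁ = b₁ + σ₁²/2`, `a = 2c₁/σ₁²`, `b = 2a₁/σ₁²` and
`f*(x) = (b^a/Γ(a)) x^{-(a+1)} e^{-b/x}`, the density `f*` satisfies the zero-flux identity
`(σ₁²/2) (x² f*(x))' = (a₁ − b₁ x) f*(x)` for every `x > 0`, and consequently solves the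
stationary Fokker–Planck equation
`(1/2) (σ₁² x² f*(x))'' − ((a₁ − b₁ x) f*(x))' = 0` on `(0, ∞)`. -/
theorem stationary_density_solves_fokker_planck
    (a₁ b₁ σ₁ c₁ a b : ℝ) (ha₁ : 0 < a₁) (hb₁ : 0 < b₁) (hσ₁ : 0 < σ₁)
    (hc₁ : c₁ = b₁ + σ₁ ^ 2 / 2) (ha : a = 2 * c₁ / σ₁ ^ 2) (hb : b = 2 * a₁ / σ₁ ^ 2)
    (fstar : ℝ → ℝ)
    (hfstar : ∀ x : ℝ, fstar x = (b ^ a / Real.Gamma a) * x ^ (-(a + 1)) * Real.exp (-b / x)) :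
    (∀ x : ℝ, 0 < x →
      σ₁ ^ 2 / 2 * deriv (fun y : ℝ => y ^ 2 * fstar y) x = (a₁ - b₁ * x) * fstar x) ∧
    (∀ x : ℝ, 0 < x →
      (1 / 2) * deriv (deriv (fun y : ℝ => σ₁ ^ 2 * y ^ 2 * fstar y)) x
        - deriv (fun y : ℝ => (a₁ - b₁ * y) * fstar y) x = 0) :=
  stationary_density_solves_fokker_planck_general a₁ b₁ σ₁ c₁ a b hσ₁ hc₁ ha hb fstar hfstar
end

section
/- Under Assumption 2.1 and for parameters a₁, b₁, b₂, σ₁, σ₂ > 0, set C₁ = b₂/F and C₂ = a₁ + C₁b₁ + C₁σ₁²/2 + b₂ + σ₂²/2. Then for all s > 0 and i > 0, the generator expression ℒV(s,i) := (1 − C₁/s)(a₁ − b₁s − i·f(s,i)) + (C₁/(2s²))(σ₁²s² + i²g²(s,i)) + (1 − 1/i)(−b₂i + i·f(s,i)) + (1/(2i²))(σ₂²i² + i²g²(s,i)) satisfies ℒV(s,i) ≤ C₂ + C₁G²/2 + K²/2. In particular ℒV is bounded above on (0,∞)². -/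
/-!
After expanding, the `∓ i f` terms cancel and `ℒV` is the constant
`a₁ + C₁b₁ + C₁σ₁²/2 + b₂ + σ₂²/2` minus nonnegative terms, plus
`(C₁f/s − b₂) i + (C₁/2)(i g/s)² + g²/2`. Since `f(0,i) = g(0,i) = 0`, the Lipschitz bounds give
`f ≤ F s` and `i g ≤ G s`; so the choice `C₁ = b₂/F` makes the first term nonpositive, the second
is at most `C₁G²/2`, and `g ≤ K` bounds the third by `K²/2`.
-/

/-- `ℒV(s,i)` with `φ = f(s,i)` and `γ = g(s,i)`. -/
noncomputable def lyapunovGenerator (a₁ b₁ b₂ σ₁ σ₂ C₁ s i φ γ : ℝ) : ℝ :=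
  (1 - C₁ / s) * (a₁ - b₁ * s - i * φ)
    + (C₁ / (2 * s ^ 2)) * (σ₁ ^ 2 * s ^ 2 + i ^ 2 * γ ^ 2)
    + (1 - 1 / i) * (-b₂ * i + i * φ)
    + (1 / (2 * i ^ 2)) * (σ₂ ^ 2 * i ^ 2 + i ^ 2 * γ ^ 2)

section LyapunovGenerator

variable {a₁ b₁ b₂ σ₁ σ₂ C₁ s i φ γ : ℝ}

theorem lyapunovGenerator_eq (hs : s ≠ 0) (hi : i ≠ 0) :
    lyapunovGenerator a₁ b₁ b₂ σ₁ σ₂ C₁ s i φ γ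
      = a₁ + C₁ * b₁ + C₁ * σ₁ ^ 2 / 2 + b₂ + σ₂ ^ 2 / 2 - b₁ * s - C₁ * a₁ / s - φ
        + (C₁ * φ / s - b₂) * i + C₁ / 2 * (i * γ / s) ^ 2 + γ ^ 2 / 2 := by
  unfold lyapunovGenerator
  field_simp
  ring

theorem lyapunovGenerator_le {F G K : ℝ} (ha₁ : 0 ≤ a₁) (hb₁ : 0 ≤ b₁) (hC₁ : 0 ≤ C₁)
    (hC₁F : C₁ * F = b₂) (hs : 0 < s) (hi : 0 < i) (hφ : 0 ≤ φ) (hφs : φ ≤ F * s)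
    (hγs : |i * γ| ≤ G * s) (hγ : 0 ≤ γ) (hγK : γ ≤ K) :
    lyapunovGenerator a₁ b₁ b₂ σ₁ σ₂ C₁ s i φ γ
      ≤ a₁ + C₁ * b₁ + C₁ * σ₁ ^ 2 / 2 + b₂ + σ₂ ^ 2 / 2 + C₁ * G ^ 2 / 2 + K ^ 2 / 2 := by
  have hdrift : C₁ * φ / s ≤ b₂ := by
    rw [div_le_iff₀ hs, ← hC₁F, mul_assoc]
    exact mul_le_mul_of_nonneg_left hφs hC₁
  have hnoise_ratio : (i * γ / s) ^ 2 ≤ G ^ 2 := by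
    refine sq_le_sq.mpr (le_trans ?_ (le_abs_self G))
    rwa [abs_div, abs_of_pos hs, div_le_iff₀ hs]
  have hnoise : γ ^ 2 ≤ K ^ 2 := pow_le_pow_left₀ hγ hγK 2
  rw [lyapunovGenerator_eq hs.ne' hi.ne']
  have : 0 ≤ C₁ * a₁ / s := by positivity
  nlinarith [mul_le_mul_of_nonneg_right hdrift hi.le, mul_le_mul_of_nonneg_left hnoise_ratio hC₁,
    mul_nonneg hb₁ hs.le]

end LyapunovGenerator

theorem abs_le_mul_of_map_zero {φ : ℝ → ℝ} {L s : ℝ} (hs : 0 ≤ s) (h0 : φ 0 = 0)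
    (hφ : |φ s - φ 0| ≤ L * |s - 0|) : |φ s| ≤ L * s := by
  simpa [h0, abs_of_nonneg hs] using hφ

theorem generator_bounded_above_general
    (a₁ b₁ b₂ σ₁ σ₂ : ℝ)
    (ha₁ : 0 < a₁) (hb₁ : 0 < b₁) (hb₂ : 0 < b₂)
    (f g : ℝ → ℝ → ℝ) (F G K : ℝ) (hF : 0 < F)
    (hfnn : ∀ s i : ℝ, 0 ≤ s → 0 ≤ i → 0 ≤ f s i)
    (hgnn : ∀ s i : ℝ, 0 ≤ s → 0 ≤ i → 0 ≤ g s i)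
    (hf0 : ∀ i : ℝ, 0 ≤ i → f 0 i = 0)
    (hg0 : ∀ i : ℝ, 0 ≤ i → g 0 i = 0)
    (hfLip : ∀ s₁ s₂ i₁ i₂ : ℝ, 0 ≤ s₁ → 0 ≤ s₂ → 0 ≤ i₁ → 0 ≤ i₂ →
      |f s₁ i₁ - f s₂ i₂| ≤ F * (|s₁ - s₂| + |i₁ - i₂|))
    (higLip : ∀ s₁ s₂ i : ℝ, 0 ≤ s₁ → 0 ≤ s₂ → 0 ≤ i →
      |i * g s₁ i - i * g s₂ i| ≤ G * |s₁ - s₂|)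
    (hgK : ∀ s i : ℝ, 0 ≤ s → 0 ≤ i → g s i ≤ K)
    (C₁ C₂ : ℝ) (hC₁ : C₁ = b₂ / F)
    (hC₂ : C₂ = a₁ + C₁ * b₁ + C₁ * σ₁ ^ 2 / 2 + b₂ + σ₂ ^ 2 / 2) :
    ∀ s i : ℝ, 0 < s → 0 < i →
      (1 - C₁ / s) * (a₁ - b₁ * s - i * f s i)
        + (C₁ / (2 * s ^ 2)) * (σ₁ ^ 2 * s ^ 2 + i ^ 2 * (g s i) ^ 2)
        + (1 - 1 / i) * (-b₂ * i + i * f s i)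
        + (1 / (2 * i ^ 2)) * (σ₂ ^ 2 * i ^ 2 + i ^ 2 * (g s i) ^ 2)
      ≤ C₂ + C₁ * G ^ 2 / 2 + K ^ 2 / 2 := by
  intro s i hs hi
  have hf : |f s i| ≤ F * s := abs_le_mul_of_map_zero (φ := (f · i)) hs.le (hf0 i hi.le)
    (by simpa using hfLip s 0 i i hs.le le_rfl hi.le hi.le)
  have hig : |i * g s i| ≤ G * s := abs_le_mul_of_map_zero (φ := (i * g · i)) hs.le
    (by simp [hg0 i hi.le]) (higLip s 0 i hs.le le_rfl hi.le)
  rw [hC₂]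
  exact lyapunovGenerator_le ha₁.le hb₁.le (by rw [hC₁]; positivity) (by rw [hC₁]; field_simp)
    hs hi (hfnn s i hs.le hi.le) ((le_abs_self _).trans hf) hig (hgnn s i hs.le hi.le)
    (hgK s i hs.le hi.le)

/-- Under Assumption 2.1 and with `C₁ = b₂/F`,
`C₂ = a₁ + C₁b₁ + C₁σ₁²/2 + b₂ + σ₂²/2`, for all `s, i > 0` the generator expression
`ℒV(s,i)` applied to the Lyapunov function `V(s,i) = (s − C₁ − C₁ ln(s/C₁)) + (i − 1 − ln i)`
satisfies `ℒV(s,i) ≤ C₂ + C₁G²/2 + K²/2`; in particular it is bounded above on `(0,∞)²`. -/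
theorem generator_bounded_above
    (a₁ b₁ b₂ σ₁ σ₂ : ℝ)
    (ha₁ : 0 < a₁) (hb₁ : 0 < b₁) (hb₂ : 0 < b₂) (hσ₁ : 0 < σ₁) (hσ₂ : 0 < σ₂)
    (f g : ℝ → ℝ → ℝ) (F G K : ℝ) (hF : 0 < F) (hG : 0 < G) (hK : 0 < K)
    (hfnn : ∀ s i : ℝ, 0 ≤ s → 0 ≤ i → 0 ≤ f s i)
    (hgnn : ∀ s i : ℝ, 0 ≤ s → 0 ≤ i → 0 ≤ g s i)
    (hf0 : ∀ i : ℝ, 0 ≤ i → f 0 i = 0)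
    (hg0 : ∀ i : ℝ, 0 ≤ i → g 0 i = 0)
    (hfLip : ∀ s₁ s₂ i₁ i₂ : ℝ, 0 ≤ s₁ → 0 ≤ s₂ → 0 ≤ i₁ → 0 ≤ i₂ →
      |f s₁ i₁ - f s₂ i₂| ≤ F * (|s₁ - s₂| + |i₁ - i₂|))
    (hgLip : ∀ s₁ s₂ i₁ i₂ : ℝ, 0 ≤ s₁ → 0 ≤ s₂ → 0 ≤ i₁ → 0 ≤ i₂ →
      |g s₁ i₁ - g s₂ i₂| ≤ G * (|s₁ - s₂| + |i₁ - i₂|))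
    (higLip : ∀ s₁ s₂ i : ℝ, 0 ≤ s₁ → 0 ≤ s₂ → 0 ≤ i →
      |i * g s₁ i - i * g s₂ i| ≤ G * |s₁ - s₂|)
    (hgK : ∀ s i : ℝ, 0 ≤ s → 0 ≤ i → g s i ≤ K)
    (C₁ C₂ : ℝ) (hC₁ : C₁ = b₂ / F)
    (hC₂ : C₂ = a₁ + C₁ * b₁ + C₁ * σ₁ ^ 2 / 2 + b₂ + σ₂ ^ 2 / 2) :
    ∀ s i : ℝ, 0 < s → 0 < i →
      (1 - C₁ / s) * (a₁ - b₁ * s - i * f s i)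
        + (C₁ / (2 * s ^ 2)) * (σ₁ ^ 2 * s ^ 2 + i ^ 2 * (g s i) ^ 2)
        + (1 - 1 / i) * (-b₂ * i + i * f s i)
        + (1 / (2 * i ^ 2)) * (σ₂ ^ 2 * i ^ 2 + i ^ 2 * (g s i) ^ 2)
      ≤ C₂ + C₁ * G ^ 2 / 2 + K ^ 2 / 2 :=
  generator_bounded_above_general a₁ b₁ b₂ σ₁ σ₂ ha₁ hb₁ hb₂ f g F G K hF hfnn hgnn hf0 hg0 hfLip
    higLip hgK C₁ C₂ hC₁ hC₂
end

section
/- Let a₁, b₁, b₂, σ₁, σ₂ > 0, let 0 < p < min{2b₁/σ₁², 2b₂/σ₂²}, p̄ > 0, and let C₃ be any constant with 0 < C₃ < (1+p)·min{b₁ − (p/2)σ₁², b₂ − (p/2)σ₂², (b₁+b₂)/2}. Define V₁(s,i) = (s+i)^{1+p} + (s+i)^{−p̄} and ℒV₁(s,i) = (1+p)(s+i)^p (a₁ − b₁s − b₂i) + (p(1+p)/2)(s+i)^{p−1}(σ₁²s² + σ₂²i²) − p̄(s+i)^{−p̄−1}(a₁ − b₁s − b₂i) + (p̄(1+p̄)/2)(s+i)^{−p̄−2}(σ₁²s²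 + σ₂²i²). Then C₄ := sup over (s,i) ∈ [0,∞)² \ {(0,0)} of (ℒV₁(s,i) + C₃V₁(s,i)) is finite; equivalently, ℒV₁(s,i) ≤ C₄ − C₃V₁(s,i) for all (s,i) ∈ [0,∞)² \ {(0,0)}. -/
/-!
Write `x = s + i > 0`. Since `(s + i)(b₁s + b₂i) - (p/2)(σ₁²s² + σ₂²i²) ≥ m (s + i)²` with
`m = min {b₁ - pσ₁²/2, b₂ - pσ₂²/2}`, the terms of `ℒV₁ + C₃V₁` carrying positive powers
of `x` are at most `(1 + p)a₁ xᵖ - ε x^(1+p)` with `ε = (1 + p)m - C₃ > 0`. Since the drift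
and the diffusion are `O(x)` and `O(x²)`, the terms carrying negative powers are at most
`K x^(-p̄) - p̄a₁ x^(-p̄-1)`. Both bounds have the shape `c yʳ - ε y^(1+r)` with `y = x` or
`y = 1/x`, and such a function is bounded above on `y ≥ 0` by `c (c/ε)ʳ`.
-/

theorem mul_rpow_sub_mul_rpow_one_add_le {c ε p x : ℝ} (hc : 0 ≤ c) (hε : 0 < ε)
    (hp : 0 ≤ p) (hx : 0 ≤ x) : c * x ^ p - ε * x ^ (1 + p) ≤ c * (c / ε) ^ p := by
  rw [add_comm, Real.rpow_add' hx (by linarith), Real.rpow_one]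
  rcases le_total x (c / ε) with hle | hge
  · have hpow : x ^ p ≤ (c / ε) ^ p := Real.rpow_le_rpow hx hle hp
    have hdecay : 0 ≤ ε * (x ^ p * x) := by positivity
    nlinarith
  · have hcx : c ≤ ε * x := (div_le_iff₀' hε).1 hge
    have hxp : 0 ≤ x ^ p := by positivity
    have hbound : 0 ≤ c * (c / ε) ^ p := by positivity
    nlinarith

theorem mul_rpow_neg_sub_mul_rpow_neg_sub_one_le {c ε q x : ℝ} (hc : 0 ≤ c) (hε : 0 < ε)
    (hq : 0 ≤ q) (hx : 0 < x) : c * x ^ (-q) - ε * x ^ (-q - 1) ≤ c * (c / ε) ^ q := by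
  have hinv (r : ℝ) : x ^ (-r) = x⁻¹ ^ r := by rw [Real.inv_rpow hx.le, Real.rpow_neg hx.le]
  rw [show -q - 1 = -(1 + q) by ring, hinv, hinv]
  exact mul_rpow_sub_mul_rpow_one_add_le hc hε hq (inv_nonneg.2 hx.le)

theorem coercive_quadratic_bound {b₁ b₂ σ₁ σ₂ k m s i : ℝ} (hs : 0 ≤ s) (hi : 0 ≤ i)
    (hk : 0 ≤ k) (h₁ : m ≤ b₁ - k * σ₁ ^ 2) (h₂ : m ≤ b₂ - k * σ₂ ^ 2) :
    m * (s + i) ^ 2 ≤ (s + i) * (b₁ * s + b₂ * i) - k * (σ₁ ^ 2 * s ^ 2 + σ₂ ^ 2 * i ^ 2) := by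
  have hx : 0 ≤ s + i := add_nonneg hs hi
  linarith [mul_nonneg (sub_nonneg.2 h₁) (mul_nonneg hs hx),
    mul_nonneg (sub_nonneg.2 h₂) (mul_nonneg hi hx),
    mul_nonneg (mul_nonneg hk (add_nonneg (sq_nonneg σ₁) (sq_nonneg σ₂))) (mul_nonneg hs hi)]

theorem positive_power_terms_le {a p m C x D Q : ℝ} (hx : 0 < x) (hp : 0 ≤ 1 + p)
    (hDQ : m * x ^ 2 ≤ x * D - p / 2 * Q) :
    (1 + p) * x ^ p * (a - D) + p * (1 + p) / 2 * x ^ (p - 1) * Q + C * x ^ (1 + p)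
      ≤ (1 + p) * a * x ^ p - ((1 + p) * m - C) * x ^ (1 + p) := by
  have h₁ : x ^ p = x ^ (p - 1) * x := by rw [← Real.rpow_add_one hx.ne']; ring_nf
  have h₂ : x ^ (1 + p) = x ^ (p - 1) * x ^ 2 := by
    rw [add_comm, Real.rpow_add_one hx.ne', h₁]; ring
  have hu : 0 ≤ x ^ (p - 1) := by positivity
  rw [h₁, h₂]
  linarith [mul_le_mul_of_nonneg_left hDQ (mul_nonneg hp hu)]

theorem negative_power_terms_le {a q β γ C x D Q : ℝ} (hx : 0 < x) (hq : 0 ≤ q)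
    (hD : x * D ≤ β * x ^ 2) (hQ : Q ≤ γ * x ^ 2) :
    -(q * x ^ (-q - 1) * (a - D)) + q * (1 + q) / 2 * x ^ (-q - 2) * Q + C * x ^ (-q)
      ≤ (C + q * β + q * (1 + q) / 2 * γ) * x ^ (-q) - q * a * x ^ (-q - 1) := by
  have h₁ : x ^ (-q - 1) = x ^ (-q - 2) * x := by rw [← Real.rpow_add_one hx.ne']; ring_nf
  have h₂ : x ^ (-q) = x ^ (-q - 2) * x ^ 2 := by
    rw [show -q = -q - 1 + 1 by ring, Real.rpow_add_one hx.ne', h₁]; ring_nf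
  have hw : 0 ≤ x ^ (-q - 2) := by positivity
  rw [h₁, h₂]
  linarith [mul_le_mul_of_nonneg_left hD (mul_nonneg hq hw),
    mul_le_mul_of_nonneg_left hQ (mul_nonneg (by positivity : 0 ≤ q * (1 + q) / 2) hw)]

theorem drift_inequality_V1_general
    (a₁ b₁ b₂ σ₁ σ₂ p pbar C₃ : ℝ)
    (ha₁ : 0 < a₁) (hb₁ : 0 < b₁) (hb₂ : 0 < b₂)
    (hp : 0 < p) (hpbar : 0 < pbar)
    (hC₃pos : 0 < C₃)
    (hC₃ : C₃ < (1 + p) * min (b₁ - (p / 2) * σ₁ ^ 2)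
        (min (b₂ - (p / 2) * σ₂ ^ 2) ((b₁ + b₂) / 2)))
    (V₁ LV₁ : ℝ → ℝ → ℝ)
    (hV₁ : ∀ s i : ℝ, V₁ s i = (s + i) ^ (1 + p) + (s + i) ^ (-pbar))
    (hLV₁ : ∀ s i : ℝ, LV₁ s i =
      (1 + p) * (s + i) ^ p * (a₁ - b₁ * s - b₂ * i)
        + (p * (1 + p) / 2) * (s + i) ^ (p - 1) * (σ₁ ^ 2 * s ^ 2 + σ₂ ^ 2 * i ^ 2)
        - pbar * (s + i) ^ (-pbar - 1) * (a₁ - b₁ * s - b₂ * i)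
        + (pbar * (1 + pbar) / 2) * (s + i) ^ (-pbar - 2) *
            (σ₁ ^ 2 * s ^ 2 + σ₂ ^ 2 * i ^ 2)) :
    ∃ C₄ : ℝ, ∀ s i : ℝ, 0 ≤ s → 0 ≤ i → (s, i) ≠ (0, 0) →
      LV₁ s i ≤ C₄ - C₃ * V₁ s i := by
  set m := min (b₁ - p / 2 * σ₁ ^ 2) (min (b₂ - p / 2 * σ₂ ^ 2) ((b₁ + b₂) / 2))
  set K := C₃ + pbar * (b₁ + b₂) + pbar * (1 + pbar) / 2 * (σ₁ ^ 2 + σ₂ ^ 2)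
  have hK : 0 ≤ K := by positivity
  have hε : 0 < (1 + p) * m - C₃ := sub_pos.2 hC₃
  refine ⟨(1 + p) * a₁ * ((1 + p) * a₁ / ((1 + p) * m - C₃)) ^ p
    + K * (K / (pbar * a₁)) ^ pbar, fun s i hs hi hne => ?_⟩
  have hx : 0 < s + i := (add_nonneg hs hi).lt_of_ne fun h => hne <| by
    rw [Prod.mk.injEq]; constructor <;> linarith
  have hcoer := coercive_quadratic_bound (b₁ := b₁) (b₂ := b₂) (σ₁ := σ₁) (σ₂ := σ₂) (m := m)
    hs hi (by positivity) (min_le_left _ _) ((min_le_right _ _).trans (min_le_left _ _))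
  have hdrift : (s + i) * (b₁ * s + b₂ * i) ≤ (b₁ + b₂) * (s + i) ^ 2 := by
    linarith [mul_nonneg hx.le (add_nonneg (mul_nonneg hb₁.le hi) (mul_nonneg hb₂.le hs))]
  have hdiffusion : σ₁ ^ 2 * s ^ 2 + σ₂ ^ 2 * i ^ 2 ≤ (σ₁ ^ 2 + σ₂ ^ 2) * (s + i) ^ 2 := by
    nlinarith [mul_nonneg hs hi]
  have hpos := positive_power_terms_le (a := a₁) (C := C₃) hx (by linarith) hcoer
  have hneg := negative_power_terms_le (a := a₁) (C := C₃) hx hpbar.le hdrift hdiffusion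
  have hgrowth :=
    mul_rpow_sub_mul_rpow_one_add_le (c := (1 + p) * a₁) (by positivity) hε hp.le hx.le
  have hsingular :=
    mul_rpow_neg_sub_mul_rpow_neg_sub_one_le hK (by positivity : 0 < pbar * a₁) hpbar.le hx
  rw [hLV₁, hV₁]
  linear_combination hpos + hneg + hgrowth + hsingular

/-- With `V₁(s,i) = (s+i)^{1+p} + (s+i)^{−p̄}` and `ℒV₁` as displayed, for any
`0 < C₃ < (1+p)·min{b₁ − (p/2)σ₁², b₂ − (p/2)σ₂², (b₁+b₂)/2}` the supremum
`C₄ = sup_{(s,i) ∈ [0,∞)²∖{(0,0)}} (ℒV₁(s,i) + C₃V₁(s,i))` is finite; equivalently there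
is a constant `C₄` such that `ℒV₁(s,i) ≤ C₄ − C₃V₁(s,i)` off the origin. -/
theorem drift_inequality_V1
    (a₁ b₁ b₂ σ₁ σ₂ p pbar C₃ : ℝ)
    (ha₁ : 0 < a₁) (hb₁ : 0 < b₁) (hb₂ : 0 < b₂) (hσ₁ : 0 < σ₁) (hσ₂ : 0 < σ₂)
    (hp : 0 < p) (hp' : p < min (2 * b₁ / σ₁ ^ 2) (2 * b₂ / σ₂ ^ 2)) (hpbar : 0 < pbar)
    (hC₃pos : 0 < C₃)
    (hC₃ : C₃ < (1 + p) * min (b₁ - (p / 2) * σ₁ ^ 2)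
        (min (b₂ - (p / 2) * σ₂ ^ 2) ((b₁ + b₂) / 2)))
    (V₁ LV₁ : ℝ → ℝ → ℝ)
    (hV₁ : ∀ s i : ℝ, V₁ s i = (s + i) ^ (1 + p) + (s + i) ^ (-pbar))
    (hLV₁ : ∀ s i : ℝ, LV₁ s i =
      (1 + p) * (s + i) ^ p * (a₁ - b₁ * s - b₂ * i)
        + (p * (1 + p) / 2) * (s + i) ^ (p - 1) * (σ₁ ^ 2 * s ^ 2 + σ₂ ^ 2 * i ^ 2)
        - pbar * (s + i) ^ (-pbar - 1) * (a₁ - b₁ * s - b₂ * i)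
        + (pbar * (1 + pbar) / 2) * (s + i) ^ (-pbar - 2) *
            (σ₁ ^ 2 * s ^ 2 + σ₂ ^ 2 * i ^ 2)) :
    ∃ C₄ : ℝ, ∀ s i : ℝ, 0 ≤ s → 0 ≤ i → (s, i) ≠ (0, 0) →
      LV₁ s i ≤ C₄ - C₃ * V₁ s i :=
  drift_inequality_V1_general a₁ b₁ b₂ σ₁ σ₂ p pbar C₃ ha₁ hb₁ hb₂ hp hpbar hC₃pos hC₃ V₁ LV₁ hV₁
    hLV₁
end
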